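/- Let L be an ω-Lie algebra over a field K of characteristic ≠ 2 and let R : L → L be a compatible Rota-Baxter operator of weight 0 on L. Define [x,y]_R := [R(x),y] + [x,R(y)] and ω_R(x,y) := ω(R(x),R(y)). Then (L, [-,-]_R, ω_R) is again an ω-Lie algebra: [-,-]_R is a skew-symmetric bilinear bracket, ω_R is a skew-symmetric bilinear form, and [[x,y]_R,z]_R + [[y,z]_R,x]_R + [[z,x]_R,y]_R = ω_R(x,y)·z + ω_R(y,z)·x + ω_R(z,x)·y for all x,y,z ∈ L. -/
import Mathlib


/-- If `R` is a compatible Rota-Baxter operator of weight 0 on an ω-Lie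
algebra `L`, then `[x,y]_R := [R x, y] + [x, R y]` and `ω_R(x,y) := ω(R x, R y)` again
define an ω-Lie algebra structure on `L`: the new bracket is skew-symmetric, the new
form is skew-symmetric, and the ω-Jacobi identity holds. -/
theorem compatible_rotaBaxter_gives_omegaLie
    {K : Type*} [Field K] (h2 : (2 : K) ≠ 0)
    {L : Type*} [AddCommGroup L] [Module K L]
    (b : L →ₗ[K] L →ₗ[K] L) (ω : L →ₗ[K] L →ₗ[K] K)
    (hskew : ∀ x y : L, b x y = - b y x)
    (hωskew : ∀ x y : L, ω x y = - ω y x)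
    (hjac : ∀ x y z : L, b (b x y) z + b (b y z) x + b (b z x) y
      = ω x y • z + ω y z • x + ω z x • y)
    (R : L →ₗ[K] L)
    (hRB : ∀ x y : L, b (R x) (R y) = R (b (R x) y + b x (R y)))
    (hcomp : ∀ x y : L, ω (R x) y + ω x (R y) = 0)
    (brR : L → L → L) (hbrR : ∀ x y : L, brR x y = b (R x) y + b x (R y))
    (ωR : L → L → K) (hωR : ∀ x y : L, ωR x y = ω (R x) (R y)) :
    (∀ x y : L, brR x y = - brR y x) ∧
    (∀ x y : L, ωR x y = - ωR y x) ∧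
    (∀ x y z : L, brR (brR x y) z + brR (brR y z) x + brR (brR z x) y
      = ωR x y • z + ωR y z • x + ωR z x • y) := by

  have key : ∀ x y : L, R (b (R x) y + b x (R y)) = b (R x) (R y) :=
    fun x y => (hRB x y).symm
  refine ⟨fun x y => by rw [hbrR, hbrR, hskew (R x) y, hskew x (R y)]; abel,
    fun x y => by rw [hωR, hωR, hωskew], ?_⟩
  intro x y z
  simp only [hbrR, hωR, map_add, LinearMap.add_apply, key]
  linear_combination (norm := module) hjac (R x) (R y) z + hjac (R y) (R z) x
    + hjac (R z) (R x) y + (hcomp y z) • R x + (hcomp z x) • R y + (hcomp x y) • R z
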